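/- Let M be a Puiseux monoid containing 1/2^k for all k ≥ 0, with M ⊆ ℤ[1/2,1/3]. Every divisor f of x² + x + 1 in the monoid algebra ℤ/2ℤ[x;M] has the form (x^{2/2^k} + x^{1/2^k} + 1)^t for some k ∈ ℕ₀ and t ∈ ℕ (up to units). -/

import Mathlib

/-!
The finitely many exponents occurring in `f` and `g` lie in `(1/N)ℕ` for some `N = 2^a 3^b`,
so with `X = x^(1/N)` the factorisation `f g = x^2 + x + 1` becomes a factorisation of
`X^(2N) + X^N + 1` in `𝔽₂[X]`. By Frobenius this polynomial is the `2^a`-th power of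
`X^(2·3^b) + X^(3^b) + 1 = Φ_{3^(b+1)}`, which is irreducible over `𝔽₂` since `2` has order
`2·3^b = φ(3^(b+1))` modulo `3^(b+1)` (lifting the exponent for `4^e - 1`). Hence the polynomial
coming from `f` is a power of `Φ_{3^(b+1)}`, i.e. `f = (x^(2/2^a) + x^(1/2^a) + 1)^t`.
-/

open Polynomial

theorem pow_succ_dvd_add_one_pow_sub_one_iff {p : ℕ} [hp : Fact p.Prime] (hodd : Odd p) (b : ℕ)
    {e : ℕ} (he : e ≠ 0) : p ^ (b + 1) ∣ (p + 1) ^ e - 1 ↔ p ^ b ∣ e := by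
  have hp1 := hp.out.one_lt
  have hval := padicValNat.pow_sub_pow (x := p + 1) (y := 1) hodd (by omega)
    (by simp) (by simp [Nat.dvd_add_right (dvd_refl p), hp.out.ne_one]) he
  have hpos : (p + 1) ^ e - 1 ≠ 0 := by
    have := Nat.one_lt_pow he (by omega : 1 < p + 1)
    omega
  rw [one_pow, Nat.add_sub_cancel, padicValNat_self] at hval
  rw [padicValNat_dvd_iff_le hpos, padicValNat_dvd_iff_le he, hval]
  omega

theorem even_of_three_dvd_two_pow_sub_one {n : ℕ} (h : 3 ∣ 2 ^ n - 1) : Even n := by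
  by_contra hn
  have hplus : 3 ∣ 2 ^ n + 1 := by
    simpa using Odd.nat_add_dvd_pow_add_pow 2 1 (Nat.not_even_iff_odd.mp hn)
  have h1 : 1 ≤ 2 ^ n := Nat.one_le_two_pow
  have h2 := Nat.dvd_sub hplus h
  rw [show 2 ^ n + 1 - (2 ^ n - 1) = 2 by omega] at h2
  omega

theorem three_pow_succ_dvd_two_pow_sub_one_iff (b n : ℕ) :
    3 ^ (b + 1) ∣ 2 ^ n - 1 ↔ 2 * 3 ^ b ∣ n := by
  rcases eq_or_ne n 0 with rfl | hn
  · simp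
  have h4 : ∀ e ≠ 0, 3 ^ (b + 1) ∣ 2 ^ (2 * e) - 1 ↔ 3 ^ b ∣ e := fun e he ↦ by
    rw [pow_mul]
    exact pow_succ_dvd_add_one_pow_sub_one_iff (p := 3) (by decide) b he
  constructor
  · intro h
    obtain ⟨e, rfl⟩ := (even_of_three_dvd_two_pow_sub_one
      ((dvd_pow_self 3 b.succ_ne_zero).trans h)).two_dvd
    exact mul_dvd_mul_left 2 ((h4 e (by omega)).1 h)
  · rintro ⟨c, rfl⟩
    rw [mul_assoc, h4 _ (by simpa [mul_assoc] using hn)]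
    exact dvd_mul_right _ _

theorem ZMod.orderOf_two_three_pow_succ (b : ℕ) :
    orderOf (2 : ZMod (3 ^ (b + 1))) = 2 * 3 ^ b := by
  have key : ∀ n, orderOf (2 : ZMod (3 ^ (b + 1))) ∣ n ↔ 2 * 3 ^ b ∣ n := fun n ↦ by
    rw [orderOf_dvd_iff_pow_eq_one, ← three_pow_succ_dvd_two_pow_sub_one_iff,
      ← Nat.modEq_iff_dvd' Nat.one_le_two_pow, Nat.ModEq.comm, ← ZMod.natCast_eq_natCast_iff]
    push_cast
    rfl
  exact Nat.dvd_antisymm ((key _).2 dvd_rfl) ((key _).1 dvd_rfl)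

namespace Polynomial

theorem cyclotomic_three_pow_succ (R : Type*) [CommRing R] (b : ℕ) :
    cyclotomic (3 ^ (b + 1)) R = X ^ (2 * 3 ^ b) + X ^ 3 ^ b + 1 := by
  rw [cyclotomic_prime_pow_eq_geom_sum Nat.prime_three]
  simp [Finset.sum_range_succ]
  ring

theorem irreducible_cyclotomic_three_pow_succ_zmod_two (b : ℕ) :
    Irreducible (cyclotomic (3 ^ (b + 1)) (ZMod 2)) := by
  have h2 : ¬ 2 ∣ 3 ^ (b + 1) := fun h ↦ by
    have := Nat.prime_two.dvd_of_dvd_pow h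
    omega
  refine ZMod.irreducible_of_dvd_cyclotomic_of_natDegree h2 dvd_rfl ?_
  rw [← orderOf_units, ZMod.coe_unitOfCoprime, natDegree_cyclotomic,
    Nat.totient_prime_pow_succ Nat.prime_three]
  push_cast
  rw [ZMod.orderOf_two_three_pow_succ]
  ring

instance subsingleton_units {R : Type*} [CommRing R] [IsDomain R] [Subsingleton Rˣ] :
    Subsingleton R[X]ˣ := by
  have h1 (w : R[X]ˣ) : (w : R[X]) = 1 := by
    obtain ⟨r, hr, hrw⟩ := isUnit_iff.mp w.isUnit
    rw [← hrw, ← map_one C, ← hr.unit_spec, Subsingleton.elim hr.unit 1, Units.val_one]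
  exact ⟨fun u v ↦ Units.ext ((h1 u).trans (h1 v).symm)⟩

theorem trinomial_pow_char_pow {R : Type*} [CommSemiring R] (p : ℕ) [Fact p.Prime] [CharP R p]
    (m a : ℕ) :
    ((X : R[X]) ^ (2 * m) + X ^ m + 1) ^ p ^ a = X ^ (2 * (p ^ a * m)) + X ^ (p ^ a * m) + 1 := by
  rw [add_pow_char_pow, add_pow_char_pow, one_pow, ← pow_mul, ← pow_mul]
  ring_nf

theorem eq_cyclotomic_pow_of_mul_eq (a b : ℕ) {f g : (ZMod 2)[X]}
    (h : f * g = X ^ (2 * (2 ^ a * 3 ^ b)) + X ^ (2 ^ a * 3 ^ b) + 1) :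
    ∃ t : ℕ, f = cyclotomic (3 ^ (b + 1)) (ZMod 2) ^ t := by
  have hdvd : f ∣ cyclotomic (3 ^ (b + 1)) (ZMod 2) ^ 2 ^ a := by
    rw [cyclotomic_three_pow_succ, trinomial_pow_char_pow, ← h]
    exact dvd_mul_right f g
  obtain ⟨t, -, ht⟩ :=
    (dvd_prime_pow (irreducible_cyclotomic_three_pow_succ_zmod_two b).prime _).1 hdvd
  exact ⟨t, associated_iff_eq.1 ht⟩

end Polynomial

theorem exists_nat_div_of_dvd {x : ℚ} {D D' n : ℕ} (hD' : D' ≠ 0) (hDD' : D ∣ D')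
    (hx : x = n / D) : ∃ m : ℕ, x = m / D' := by
  obtain ⟨k, rfl⟩ := hDD'
  have hk : (k : ℚ) ≠ 0 := by exact_mod_cast right_ne_zero_of_mul hD'
  exact ⟨n * k, by rw [hx]; push_cast; rw [mul_div_mul_right _ _ hk]⟩

theorem exists_nat_div_of_int_div {x : ℚ} (hx0 : 0 ≤ x) {z : ℤ} {D : ℕ} (hx : x = z / D) :
    ∃ n : ℕ, x = n / D := by
  rcases Nat.eq_zero_or_pos D with rfl | hD
  · exact ⟨0, by simpa using hx⟩
  have hz : (0 : ℚ) ≤ z := by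
    rwa [hx, le_div_iff₀ (by exact_mod_cast hD), zero_mul] at hx0
  lift z to ℕ using (by exact_mod_cast hz)
  exact ⟨z, by rwa [Int.cast_natCast] at hx⟩

theorem exists_common_denominator_pow_mul_pow {c d : ℕ} (hc : c ≠ 0) (hd : d ≠ 0)
    (s : Finset ℚ) (hs : ∀ x ∈ s, 0 ≤ x ∧ ∃ (z : ℤ) (i j : ℕ), x = z / (c ^ i * d ^ j)) :
    ∃ a b : ℕ, ∀ x ∈ s, ∃ n : ℕ, x = n / (c ^ a * d ^ b) := by
  induction s using Finset.induction_on with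
  | empty => exact ⟨0, 0, by simp⟩
  | insert x s _ ih =>
    obtain ⟨hx0, z, i, j, hx⟩ := hs x (Finset.mem_insert_self x s)
    obtain ⟨a, b, hab⟩ := ih fun y hy ↦ hs y (Finset.mem_insert_of_mem hy)
    have hdvd {i' j' : ℕ} (hi : i' ≤ max a i) (hj : j' ≤ max b j) :
        c ^ i' * d ^ j' ∣ c ^ max a i * d ^ max b j :=
      mul_dvd_mul (pow_dvd_pow c hi) (pow_dvd_pow d hj)
    have hD : c ^ max a i * d ^ max b j ≠ 0 := by positivity
    refine ⟨max a i, max b j, fun y hy ↦ ?_⟩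
    rcases Finset.mem_insert.mp hy with rfl | hy
    · obtain ⟨n, hn⟩ := exists_nat_div_of_int_div (D := c ^ i * d ^ j) hx0 (by exact_mod_cast hx)
      exact_mod_cast exists_nat_div_of_dvd hD (hdvd (le_max_right _ _) (le_max_right _ _)) hn
    · obtain ⟨n, hn⟩ := hab y hy
      exact_mod_cast exists_nat_div_of_dvd hD (hdvd (le_max_left _ _) (le_max_left _ _))
        (by exact_mod_cast hn)

def natDivAddHom (N : ℕ) : ℕ →+ ℚ :=
  (AddMonoidHom.mulRight (N : ℚ)⁻¹).comp (Nat.castAddMonoidHom ℚ)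

theorem natDivAddHom_apply (N n : ℕ) : natDivAddHom N n = n / N :=
  (div_eq_mul_inv _ _).symm

theorem natDivAddHom_injective {N : ℕ} (hN : N ≠ 0) : Function.Injective (natDivAddHom N) :=
  fun m n h ↦ by simpa [natDivAddHom_apply, hN] using h

namespace Polynomial

variable {R : Type*} [CommSemiring R]

variable (R) in
noncomputable def rescaleExponents (N : ℕ) : R[X] →+* AddMonoidAlgebra R ℚ :=
  (AddMonoidAlgebra.mapDomainRingHom R (natDivAddHom N)).comp (toFinsuppIso R).toRingHom

theorem rescaleExponents_X_pow (N n : ℕ) :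
    rescaleExponents R N (X ^ n) = AddMonoidAlgebra.single ((n : ℚ) / N) 1 := by
  simp [rescaleExponents, X_pow_eq_monomial, toFinsupp_monomial, natDivAddHom_apply]

theorem rescaleExponents_trinomial (N m : ℕ) :
    rescaleExponents R N (X ^ (2 * m) + X ^ m + 1) =
      AddMonoidAlgebra.single (2 * ((m : ℚ) / N)) 1 + AddMonoidAlgebra.single ((m : ℚ) / N) 1
        + 1 := by
  rw [map_add, map_add, map_one, rescaleExponents_X_pow, rescaleExponents_X_pow]
  push_cast
  ring_nf

theorem rescaleExponents_injective {N : ℕ} (hN : N ≠ 0) :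
    Function.Injective (rescaleExponents R N) :=
  (AddMonoidAlgebra.mapDomain_injective (natDivAddHom_injective hN)).comp
    (toFinsuppIso R).injective

theorem exists_rescaleExponents_eq {N : ℕ} (hN : N ≠ 0) {u : AddMonoidAlgebra R ℚ}
    (hu : ∀ x ∈ u.coeff.support, ∃ n : ℕ, x = n / N) : ∃ p, rescaleExponents R N p = u := by
  refine ⟨(toFinsuppIso R).symm
    (AddMonoidAlgebra.comapDomain _ (natDivAddHom_injective hN) u), ?_⟩
  simp only [rescaleExponents, RingHom.comp_apply, RingEquiv.toRingHom_eq_coe,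
    RingEquiv.coe_toRingHom, RingEquiv.apply_symm_apply]
  refine AddMonoidAlgebra.mapDomain_comapDomain (fun x hx ↦ ?_) _
  obtain ⟨n, hn⟩ := hu x hx
  exact ⟨n, (natDivAddHom_apply N n).trans hn.symm⟩

theorem exists_rescaleExponents_eq_of_two_three_denominators {M : AddSubmonoid ℚ}
    (hpos : ∀ x ∈ M, 0 ≤ x) (hsub : ∀ x ∈ M, ∃ (z : ℤ) (i j : ℕ), x = (z : ℚ) / (2 ^ i * 3 ^ j))
    (f g : AddMonoidAlgebra R M) :
    ∃ a b : ℕ, ∃ p q : R[X],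
      rescaleExponents R (2 ^ a * 3 ^ b) p = AddMonoidAlgebra.mapDomainRingHom R M.subtype f ∧
      rescaleExponents R (2 ^ a * 3 ^ b) q = AddMonoidAlgebra.mapDomainRingHom R M.subtype g := by
  have hsupp (u : AddMonoidAlgebra R M) :
      ∀ x ∈ (AddMonoidAlgebra.mapDomainRingHom R M.subtype u).coeff.support, x ∈ M := by
    intro x hx
    obtain ⟨y, -, rfl⟩ := Finset.mem_image.1 (Finsupp.mapDomain_support hx)
    exact y.2
  obtain ⟨a, b, hden⟩ := exists_common_denominator_pow_mul_pow two_ne_zero three_ne_zero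
    ((AddMonoidAlgebra.mapDomainRingHom R M.subtype f).coeff.support ∪
      (AddMonoidAlgebra.mapDomainRingHom R M.subtype g).coeff.support) fun x hx ↦ by
      have hxM : x ∈ M := (Finset.mem_union.1 hx).elim (hsupp f x) (hsupp g x)
      exact ⟨hpos x hxM, by exact_mod_cast hsub x hxM⟩
  have hN : 2 ^ a * 3 ^ b ≠ 0 := by positivity
  obtain ⟨p, hp⟩ := exists_rescaleExponents_eq hN fun x hx ↦ by
    exact_mod_cast hden x (Finset.mem_union_left _ hx)
  obtain ⟨q, hq⟩ := exists_rescaleExponents_eq hN fun x hx ↦ by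
    exact_mod_cast hden x (Finset.mem_union_right _ hx)
  exact ⟨a, b, p, q, hp, hq⟩

end Polynomial

/-- Let `M` be a Puiseux monoid (an additive submonoid of `ℚ≥0`) contained in
`ℤ[1/2, 1/3]` and containing `1/2^k` for every `k ≥ 0`. Then every divisor `f` of
`x^2 + x + 1` in the monoid algebra `ℤ/2ℤ[x; M]` has the form
`(x^(2/2^k) + x^(1/2^k) + 1)^t` for some `k, t ∈ ℕ` (the only unit of the algebra
being `1`, which is the case `t = 0`). -/
theorem divisors_of_x2_x_1 (M : AddSubmonoid ℚ)
    (hpos : ∀ x ∈ M, 0 ≤ x)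
    (hsub : ∀ x ∈ M, ∃ (z : ℤ) (i j : ℕ), x = (z : ℚ) / (2 ^ i * 3 ^ j))
    (h : ∀ k : ℕ, (1 : ℚ) / 2 ^ k ∈ M) :
    ∀ f g : AddMonoidAlgebra (ZMod 2) M,
      f * g = AddMonoidAlgebra.single (⟨2, by have := M.add_mem (h 0) (h 0); norm_num at this; exact this⟩ : M) 1
            + AddMonoidAlgebra.single (⟨1, by have := h 0; norm_num at this; exact this⟩ : M) 1 + 1 →
      ∃ k t : ℕ,
        f = (AddMonoidAlgebra.single (⟨2 / 2 ^ k, by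
                have := M.add_mem (h k) (h k)
                rwa [show (1:ℚ)/2^k + 1/2^k = 2/2^k by ring] at this⟩ : M) 1
          + AddMonoidAlgebra.single (⟨1 / 2 ^ k, h k⟩ : M) 1 + 1) ^ t := by
  intro f g hfg
  obtain ⟨a, b, p, q, hp, hq⟩ := exists_rescaleExponents_eq_of_two_three_denominators hpos hsub f g
  set ι := AddMonoidAlgebra.mapDomainRingHom (ZMod 2) M.subtype
  have hι : Function.Injective ι := AddMonoidAlgebra.mapDomain_injective Subtype.val_injective
  have hι_single (x : M) : ι (AddMonoidAlgebra.single x 1) = AddMonoidAlgebra.single (x : ℚ) 1 :=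
    AddMonoidAlgebra.mapDomain_single
  have hN : 2 ^ a * 3 ^ b ≠ 0 := by positivity
  have hpq : p * q = X ^ (2 * (2 ^ a * 3 ^ b)) + X ^ (2 ^ a * 3 ^ b) + 1 := by
    refine rescaleExponents_injective hN ?_
    rw [map_mul, hp, hq, ← map_mul, hfg, rescaleExponents_trinomial]
    simp [hι_single]
  obtain ⟨t, rfl⟩ := eq_cyclotomic_pow_of_mul_eq a b hpq
  refine ⟨a, t, hι ?_⟩
  have hscale : ((3 ^ b : ℕ) : ℚ) / (2 ^ a * 3 ^ b : ℕ) = 1 / 2 ^ a := by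
    push_cast
    field_simp
  rw [← hp, map_pow, map_pow, cyclotomic_three_pow_succ, rescaleExponents_trinomial, hscale]
  simp only [map_add, map_one, hι_single, mul_one_div]
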